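/- A signed graph is balanced (every cycle has positive sign product) if and only if for every pair of vertices x, y (possibly equal), all chains (walks) between x and y have the same sign (product of edge signs). -/

import Mathlib

namespace SignedGraph

variable {V : Type*}

/-- The sign of a walk in a signed graph: the product of its edge signs. -/
def walkSign {G : SimpleGraph V} (σ : V → V → ℤˣ) : {u v : V} → G.Walk u v → ℤˣ
  | _, _, SimpleGraph.Walk.nil => 1
  | u, _, SimpleGraph.Walk.cons (v := w) _ p => σ u w * walkSign σ p

/-- A signed graph is balanced if every cycle has positive sign. -/
def Balanced (G : SimpleGraph V) (σ : V → V → ℤˣ) : Prop :=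
  ∀ ⦃u : V⦄ (c : G.Walk u u), c.IsCycle → walkSign σ c = 1

/-- Sign connection: every two distinct vertices are joined both by a
positive and by a negative walk. -/
def SignConnected (G : SimpleGraph V) (σ : V → V → ℤˣ) : Prop :=
  ∀ x y : V, x = y ∨
    ((∃ p : G.Walk x y, walkSign σ p = 1) ∧ (∃ p : G.Walk x y, walkSign σ p = -1))

open Classical in
/-- Switching by a vertex subset `W`: negate the signs of edges with exactly
one endpoint in `W`. -/
noncomputable def switchSign (W : Set V) (σ : V → V → ℤˣ) (u v : V) : ℤˣ :=
  if Xor' (u ∈ W) (v ∈ W) then -σ u v else σ u v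

end SignedGraph

open SignedGraph

/-!
Shortcutting a walk as `SimpleGraph.Walk.bypass` does removes closed subwalks made of one edge
`uw` followed by a path from `w` back to `u`. Such a subwalk is either a cycle or the edge `uw`
traversed twice, so in a balanced graph with symmetric signature it has sign `1`, and bypassing
preserves the sign. The bypass of a closed walk is empty, so every closed walk is positive, and two
walks `p, q` from `x` to `y` satisfy `sign p * sign q = sign (p ++ q.reverse) = 1`.
-/

namespace SignedGraph

open SimpleGraph Walk

variable {V : Type*} {G : SimpleGraph V} {σ : V → V → ℤˣ}

@[simp]
lemma walkSign_nil {u : V} : walkSign σ (nil : G.Walk u u) = 1 := rfl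

@[simp]
lemma walkSign_cons {u w v : V} (h : G.Adj u w) (p : G.Walk w v) :
    walkSign σ (cons h p) = σ u w * walkSign σ p := rfl

lemma walkSign_append {u v w : V} (p : G.Walk u v) (q : G.Walk v w) :
    walkSign σ (p.append q) = walkSign σ p * walkSign σ q := by
  induction p with
  | nil => simp
  | cons h p ih => simp [ih, mul_assoc]

lemma walkSign_reverse (hσ : ∀ u v : V, σ u v = σ v u) {u v : V} (p : G.Walk u v) :
    walkSign σ p.reverse = walkSign σ p := by
  induction p with
  | nil => rfl
  | cons h p ih => simp [walkSign_append, ih, hσ, mul_comm]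

lemma Balanced.walkSign_cons_of_isPath (hB : Balanced G σ) (hσ : ∀ u v : V, σ u v = σ v u)
    {u w : V} (h : G.Adj u w) {q : G.Walk w u} (hq : q.IsPath) :
    walkSign σ (cons h q) = 1 := by
  by_cases he : s(w, u) ∈ q.edges
  · rw [hq.eq_adj_toWalk_of_mem_edges he]
    simp [hσ w u]
  · exact hB _ ((cons_isCycle_iff q h).mpr ⟨hq, by rwa [Sym2.eq_swap]⟩)

lemma Balanced.walkSign_bypass [DecidableEq V] (hB : Balanced G σ)
    (hσ : ∀ u v : V, σ u v = σ v u) {u v : V} (p : G.Walk u v) :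
    walkSign σ p.bypass = walkSign σ p := by
  induction p with
  | nil => rfl
  | @cons u w v h p ih =>
    rw [bypass, walkSign_cons, ← ih]
    split_ifs with hu
    · have hloop := hB.walkSign_cons_of_isPath hσ h (p.bypass_isPath.takeUntil hu)
      conv_rhs => rw [← p.bypass.take_spec hu, walkSign_append, ← mul_assoc]
      rw [← walkSign_cons h, hloop, one_mul]
    · rfl

lemma Balanced.walkSign_eq_one (hB : Balanced G σ) (hσ : ∀ u v : V, σ u v = σ v u) {u : V}
    (c : G.Walk u u) : walkSign σ c = 1 := by
  classical
  rw [← hB.walkSign_bypass hσ, (isPath_iff_nil.mp c.bypass_isPath).eq_nil, walkSign_nil]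

end SignedGraph

theorem stmt_0_general {V : Type*} (G : SimpleGraph V) (σ : V → V → ℤˣ)
    (hσ : ∀ u v : V, σ u v = σ v u) :
    Balanced G σ ↔
      ∀ (x y : V) (p q : G.Walk x y), walkSign σ p = walkSign σ q := by
  refine ⟨fun hB x y p q => ?_, fun h u c _ => h u u c .nil⟩
  have hclosed := hB.walkSign_eq_one hσ (p.append q.reverse)
  rw [walkSign_append, walkSign_reverse hσ, mul_eq_one_iff_eq_inv] at hclosed
  rw [hclosed, Int.units_inv_eq_self]

/-- A signed graph is balanced iff for every pair of vertices, all walks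
between them have the same sign. -/
theorem stmt_0 {V : Type*} [Fintype V] (G : SimpleGraph V) (σ : V → V → ℤˣ)
    (hσ : ∀ u v : V, σ u v = σ v u) :
    Balanced G σ ↔
      ∀ (x y : V) (p q : G.Walk x y), walkSign σ p = walkSign σ q :=
  stmt_0_general G σ hσ
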